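/- FKN theorem: there is an absolute constant C > 0 such that for every Boolean function f : {-1,1}ⁿ → {-1,1} there exists i ∈ [n] with ‖f − f̂({i}) x_i‖₂² ≤ C (1 − W¹(f)), where W¹(f) = ∑_{|S|=1} f̂(S)². One can take C = 2 + 3⁶. -/
import Mathlib


open Finset Function

noncomputable section

/-- Expectation with respect to the uniform measure on the Hamming cube,
encoded as `Fin n → Bool` (`true ↦ 1`, `false ↦ -1`). -/
def expec {n : ℕ} (f : (Fin n → Bool) → ℝ) : ℝ :=
  (∑ x : Fin n → Bool, f x) / 2 ^ n

/-- The character χ_S. -/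
def chi {n : ℕ} (S : Finset (Fin n)) (x : Fin n → Bool) : ℝ :=
  ∏ i ∈ S, (if x i then (1 : ℝ) else -1)

/-- Fourier coefficient f̂(S) = E[f χ_S]. -/
def fcoef {n : ℕ} (f : (Fin n → Bool) → ℝ) (S : Finset (Fin n)) : ℝ :=
  expec (fun x => f x * chi S x)

/-- Influence of coordinate i: probability that flipping coordinate i changes f. -/
def infl {n : ℕ} (f : (Fin n → Bool) → ℝ) (i : Fin n) : ℝ :=
  expec (fun x => if f x ≠ f (Function.update x i (!(x i))) then (1 : ℝ) else 0)

/-- Total influence. -/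
def totalInfl {n : ℕ} (f : (Fin n → Bool) → ℝ) : ℝ :=
  ∑ i : Fin n, infl f i

/-- The p-norm ‖f‖_p = (E[|f|^p])^{1/p}. -/
def pnorm {n : ℕ} (p : ℝ) (f : (Fin n → Bool) → ℝ) : ℝ :=
  (expec (fun x => |f x| ^ p)) ^ (1 / p)

/-- The discrete i-th derivative. -/
def deriv' {n : ℕ} (i : Fin n) (g : (Fin n → Bool) → ℝ) : (Fin n → Bool) → ℝ :=
  fun x => (g (Function.update x i true) - g (Function.update x i false)) / 2

/-- The noise operator T_ρ. -/
def noiseOp {n : ℕ} (ρ : ℝ) (f : (Fin n → Bool) → ℝ) : (Fin n → Bool) → ℝ :=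
  fun x => ∑ S : Finset (Fin n), ρ ^ S.card * fcoef f S * chi S x

end

namespace FKNaux

noncomputable section

variable {n : ℕ}

def sgn (i : Fin n) (x : Fin n → Bool) : ℝ := if x i then 1 else -1

lemma sgn_cases (i : Fin n) (x : Fin n → Bool) : sgn i x = 1 ∨ sgn i x = -1 := by
  unfold sgn; by_cases h : x i <;> simp [h]

lemma chi_singleton (i : Fin n) (x : Fin n → Bool) : chi {i} x = sgn i x := by
  simp [chi, sgn]

lemma expec_congr {F G : (Fin n → Bool) → ℝ} (h : ∀ x, F x = G x) : expec F = expec G :=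
  congrArg expec (funext h)

lemma expec_add (F G : (Fin n → Bool) → ℝ) :
    expec (fun x => F x + G x) = expec F + expec G := by
  simp [expec, Finset.sum_add_distrib, add_div]

lemma expec_sub (F G : (Fin n → Bool) → ℝ) :
    expec (fun x => F x - G x) = expec F - expec G := by
  simp [expec, Finset.sum_sub_distrib, sub_div]

lemma expec_const_mul (c : ℝ) (F : (Fin n → Bool) → ℝ) :
    expec (fun x => c * F x) = c * expec F := by
  simp [expec, ← Finset.mul_sum, mul_div_assoc]

lemma expec_const (c : ℝ) : expec (fun _ : Fin n → Bool => c) = c := by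
  have hc : ((Finset.univ : Finset (Fin n → Bool)).card : ℝ) = 2 ^ n := by
    simp [Finset.card_univ, Fintype.card_fun]
  rw [expec, Finset.sum_const, nsmul_eq_mul, hc, mul_comm, mul_div_assoc,
    div_self (by positivity : ((2:ℝ)^n) ≠ 0), mul_one]

lemma expec_nonneg {F : (Fin n → Bool) → ℝ} (h : ∀ x, 0 ≤ F x) : 0 ≤ expec F := by
  apply div_nonneg (Finset.sum_nonneg fun x _ => h x) (by positivity)

lemma expec_mono {F G : (Fin n → Bool) → ℝ} (h : ∀ x, F x ≤ G x) : expec F ≤ expec G := by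
  apply div_le_div_of_nonneg_right ?_ (by positivity)
  exact Finset.sum_le_sum fun x _ => h x

lemma expec_cs (F G : (Fin n → Bool) → ℝ) :
    expec (fun x => F x * G x) ^ 2 ≤
      expec (fun x => F x ^ 2) * expec (fun x => G x ^ 2) := by
  have h := Finset.sum_mul_sq_le_sq_mul_sq Finset.univ F G
  unfold expec
  rw [div_pow, div_mul_div_comm]
  have h2 : ((2:ℝ)^n)^2 = (2:ℝ)^n * (2:ℝ)^n := by ring
  rw [h2]
  exact div_le_div_of_nonneg_right h (by positivity) |>.trans_eq rfl

end
end FKNaux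

-- continuation test: appended lemmas
namespace FKNaux
noncomputable section
variable {n : ℕ}

lemma expec_sum {ι : Type*} (T : Finset ι) (F : ι → (Fin n → Bool) → ℝ) :
    expec (fun x => ∑ i ∈ T, F i x) = ∑ i ∈ T, expec (F i) := by
  unfold expec
  rw [← Finset.sum_div, Finset.sum_comm]

lemma expec_sgn_mul (k : Fin n) (F : (Fin n → Bool) → ℝ)
    (hF : ∀ x b, F (Function.update x k b) = F x) :
    expec (fun x => sgn k x * F x) = 0 := by
  have key : ∑ x : Fin n → Bool, sgn k x * F x = 0 := by
    have hinv : Function.Involutive (fun x : Fin n → Bool => Function.update x k (!(x k))) := by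
      intro x
      funext j
      by_cases h : j = k
      · subst h; simp
      · simp [Function.update_of_ne h]
    set σ := hinv.toPerm _ with hσ
    have h1 : ∑ x : Fin n → Bool, sgn k (σ x) * F (σ x)
        = ∑ x : Fin n → Bool, sgn k x * F x :=
      Equiv.sum_comp σ (fun x => sgn k x * F x)
    have h2 : ∀ x : Fin n → Bool, sgn k (σ x) * F (σ x) = -(sgn k x * F x) := by
      intro x
      have ha : sgn k (σ x) = - sgn k x := by
        show sgn k (Function.update x k (!(x k))) = - sgn k x
        unfold sgn
        cases h : x k <;> simp [h]
      have hb : F (σ x) = F x := hF x _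
      rw [ha, hb]; ring
    have h3 : ∑ x : Fin n → Bool, sgn k (σ x) * F (σ x)
        = -∑ x : Fin n → Bool, sgn k x * F x := by
      rw [← Finset.sum_neg_distrib]
      exact Finset.sum_congr rfl fun x _ => h2 x
    linarith [h1, h3.symm.trans h1]
  rw [expec, key, zero_div]

end
end FKNaux

namespace FKNaux
noncomputable section
variable {n : ℕ}

def gg (a : Fin n → ℝ) (T : Finset (Fin n)) (x : Fin n → Bool) : ℝ :=
  ∑ i ∈ T, a i * sgn i x

lemma sgn_update_ne {i k : Fin n} (h : i ≠ k) (x : Fin n → Bool) (b : Bool) :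
    sgn i (Function.update x k b) = sgn i x := by
  unfold sgn
  rw [Function.update_of_ne h]

lemma gg_update (a : Fin n → ℝ) {T : Finset (Fin n)} {k : Fin n} (hk : k ∉ T)
    (x : Fin n → Bool) (b : Bool) : gg a T (Function.update x k b) = gg a T x := by
  unfold gg
  refine Finset.sum_congr rfl fun i hi => ?_
  rw [sgn_update_ne (show i ≠ k by rintro rfl; exact hk hi) x b]

lemma key (a : Fin n → ℝ) (T : Finset (Fin n)) :
    expec (fun x => gg a T x ^ 2) = ∑ i ∈ T, a i ^ 2 ∧
    expec (fun x => gg a T x ^ 4)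
      = 3 * (∑ i ∈ T, a i ^ 2) ^ 2 - 2 * ∑ i ∈ T, a i ^ 4 ∧
    expec (fun x => (gg a T x ^ 2 - ∑ i ∈ T, a i ^ 2) ^ 4) ≤
      81 * (expec (fun x => (gg a T x ^ 2 - ∑ i ∈ T, a i ^ 2) ^ 2)) ^ 2 := by
  induction T using Finset.induction_on with
  | empty =>
      refine ⟨?_, ?_, ?_⟩ <;> simp [gg, expec_const]
  | @insert k T hk ih =>
      obtain ⟨ih1, ih2, ih3⟩ := ih
      set c := a k with hc
      set g := gg a T with hg
      set W := ∑ i ∈ T, a i ^ 2 with hW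
      set P := ∑ i ∈ T, a i ^ 4 with hP
      have hWnn : 0 ≤ W := Finset.sum_nonneg fun i _ => sq_nonneg _
      have hPnn : 0 ≤ P := Finset.sum_nonneg fun i _ => by positivity
      have hsum2 : ∑ i ∈ insert k T, a i ^ 2 = c ^ 2 + W := by
        rw [Finset.sum_insert hk]
      have hsum4 : ∑ i ∈ insert k T, a i ^ 4 = c ^ 4 + P := by
        rw [Finset.sum_insert hk]
      have hptw : ∀ x, gg a (insert k T) x = c * sgn k x + g x := by
        intro x; rw [gg, Finset.sum_insert hk]; rfl
      -- independence facts
      have hgind : ∀ (x : Fin n → Bool) (b : Bool),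
          g (Function.update x k b) = g x := fun x b => gg_update a hk x b
      -- helper to compute expectations of (F + sgn k * H) with H independent of k
      have hsplit : ∀ (F H : (Fin n → Bool) → ℝ),
          (∀ x b, H (Function.update x k b) = H x) →
          expec (fun x => F x + sgn k x * H x) = expec F := by
        intro F H hH
        rw [expec_add, expec_sgn_mul k H hH, add_zero]
      -- (A)
      have eA : expec (fun x => gg a (insert k T) x ^ 2)
          = expec (fun x => (g x ^ 2 + c ^ 2) + sgn k x * (2 * c * g x)) := by
        refine expec_congr fun x => ?_
        rw [hptw x]
        rcases sgn_cases k x with h | h <;> rw [h] <;> ring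
      have eA2 : expec (fun x => gg a (insert k T) x ^ 2) = W + c ^ 2 := by
        rw [eA, hsplit _ _ (fun x b => by rw [hgind x b])]
        rw [show (fun x => g x ^ 2 + c ^ 2) = (fun x => g x ^ 2 + (fun _ : Fin n → Bool => c ^ 2) x) from rfl,
          expec_add, ih1, expec_const]
      refine ⟨by rw [eA2, hsum2]; ring, ?_, ?_⟩
      -- (B)
      · have eB : expec (fun x => gg a (insert k T) x ^ 4)
            = expec (fun x => (g x ^ 4 + 6 * c ^ 2 * g x ^ 2 + c ^ 4)
                + sgn k x * (4 * c * g x ^ 3 + 4 * c ^ 3 * g x)) := by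
          refine expec_congr fun x => ?_
          rw [hptw x]
          rcases sgn_cases k x with h | h <;> rw [h] <;> ring
        rw [eB, hsplit _ _ (fun x b => by rw [hgind x b])]
        have : expec (fun x => g x ^ 4 + 6 * c ^ 2 * g x ^ 2 + c ^ 4)
            = expec (fun x => g x ^ 4) + 6 * c ^ 2 * expec (fun x => g x ^ 2) + c ^ 4 := by
          rw [show (fun x => g x ^ 4 + 6 * c ^ 2 * g x ^ 2 + c ^ 4)
              = (fun x => (g x ^ 4 + 6 * c ^ 2 * g x ^ 2) + (fun _ : Fin n → Bool => c ^ 4) x) from rfl,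
            expec_add, expec_const,
            show (fun x => g x ^ 4 + 6 * c ^ 2 * g x ^ 2)
              = (fun x => g x ^ 4 + (6 * c ^ 2) * g x ^ 2) from rfl,
            expec_add, expec_const_mul]
        rw [this, ih2, ih1, hsum2, hsum4]
        ring
      -- (C)
      · set D : (Fin n → Bool) → ℝ := fun x => g x ^ 2 - W with hD
        have hDind : ∀ (x : Fin n → Bool) (b : Bool),
            D (Function.update x k b) = D x := by
          intro x b; simp only [hD]; rw [hgind]
        have hDptw : ∀ x, gg a (insert k T) x ^ 2 - ∑ i ∈ insert k T, a i ^ 2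
            = D x + 2 * c * sgn k x * g x := by
          intro x
          rw [hptw x, hsum2]
          simp only [hD]
          rcases sgn_cases k x with h | h <;> rw [h] <;> ring
        set u := expec (fun x => D x ^ 2) with hu
        have hunn : 0 ≤ u := expec_nonneg fun x => sq_nonneg _
        set E4 := expec (fun x => g x ^ 4) with hE4
        have hE4v : E4 = 3 * W ^ 2 - 2 * P := ih2
        have hE4nn : 0 ≤ E4 := expec_nonneg fun x => by positivity
        set q := expec (fun x => D x ^ 2 * g x ^ 2) with hq
        have hqnn : 0 ≤ q := expec_nonneg fun x => by positivity
        -- second moment of D'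
        have eC2 : expec (fun x => (gg a (insert k T) x ^ 2 - ∑ i ∈ insert k T, a i ^ 2) ^ 2)
            = u + 4 * c ^ 2 * W := by
          have e := expec_congr (F := fun x =>
              (gg a (insert k T) x ^ 2 - ∑ i ∈ insert k T, a i ^ 2) ^ 2)
            (G := fun x => (D x ^ 2 + (4 * c ^ 2) * g x ^ 2) + sgn k x * (4 * c * (D x * g x)))
            (fun x => by
              rw [hDptw x]
              rcases sgn_cases k x with h | h <;> rw [h] <;> ring)
          rw [e, hsplit _ _ (fun x b => by rw [hgind x b, hDind x b]),
            expec_add, expec_const_mul, ih1]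
        -- fourth moment of D'
        have eC4 : expec (fun x => (gg a (insert k T) x ^ 2 - ∑ i ∈ insert k T, a i ^ 2) ^ 4)
            = expec (fun x => D x ^ 4) + 24 * c ^ 2 * q + 16 * c ^ 4 * E4 := by
          have e := expec_congr (F := fun x =>
              (gg a (insert k T) x ^ 2 - ∑ i ∈ insert k T, a i ^ 2) ^ 4)
            (G := fun x => (D x ^ 4 + (24 * c ^ 2) * (D x ^ 2 * g x ^ 2)
                  + (16 * c ^ 4) * g x ^ 4)
                + sgn k x * (8 * c * (D x ^ 3 * g x) + 32 * c ^ 3 * (D x * g x ^ 3)))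
            (fun x => by
              rw [hDptw x]
              rcases sgn_cases k x with h | h <;> rw [h] <;> ring)
          rw [e, hsplit _ _ (fun x b => by rw [hgind x b, hDind x b]),
            expec_add, expec_add, expec_const_mul, expec_const_mul]
        -- Cauchy-Schwarz : q ≤ sqrt(ED⁴ · Eg⁴), via IH bounds
        set Q4 := expec (fun x => D x ^ 4) with hQ4
        have hD4 : Q4 ≤ 81 * u ^ 2 := ih3
        have hD4nn : 0 ≤ Q4 := expec_nonneg fun x => by positivity
        have hcs : q ^ 2 ≤ Q4 * E4 := by
          have h := expec_cs (fun x => D x ^ 2) (fun x => g x ^ 2)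
          have e1 : expec (fun x => (D x ^ 2) ^ 2) = expec (fun x => D x ^ 4) :=
            expec_congr fun x => by ring
          have e2 : expec (fun x => (g x ^ 2) ^ 2) = expec (fun x => g x ^ 4) :=
            expec_congr fun x => by ring
          rw [e1, e2] at h
          exact h
        have hE4le : E4 ≤ 9 * W ^ 2 := by rw [hE4v]; nlinarith [hPnn, sq_nonneg W]
        have hqle : q ≤ 27 * u * W := by
          have h1 : q ^ 2 ≤ (27 * u * W) ^ 2 := by
            calc q ^ 2 ≤ Q4 * E4 := hcs
            _ ≤ (81 * u ^ 2) * (9 * W ^ 2) :=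
                mul_le_mul hD4 hE4le hE4nn (mul_nonneg (by norm_num) (sq_nonneg u))
            _ = (27 * u * W) ^ 2 := by ring
          nlinarith [hqnn, mul_nonneg (mul_nonneg (by norm_num : (0:ℝ) ≤ 27) hunn) hWnn]
        rw [eC2, eC4]
        clear_value Q4 q E4 u D P W g c
        clear hQ4 hq hE4 hu hD hc hg hW hP ih3 hcs eC2 hsplit hgind hDind hptw hDptw eA eA2 ih1 hsum2 hsum4
        have h24 : (0:ℝ) ≤ 24 * c ^ 2 := by positivity
        have h16 : (0:ℝ) ≤ 16 * c ^ 4 := by positivity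
        nlinarith [mul_le_mul_of_nonneg_left hqle h24,
          mul_le_mul_of_nonneg_left hE4le h16,
          hD4, sq_nonneg c, mul_nonneg hunn hWnn,
          mul_nonneg (mul_nonneg (sq_nonneg c) (sq_nonneg c)) (mul_nonneg hWnn hWnn)]

end
end FKNaux

namespace FKNaux
noncomputable section
variable {n : ℕ}

lemma L1L2 (D : (Fin n → Bool) → ℝ)
    (h4 : expec (fun x => D x ^ 4) ≤ 81 * (expec (fun x => D x ^ 2)) ^ 2) :
    expec (fun x => D x ^ 2) ≤ 81 * (expec (fun x => |D x|)) ^ 2 := by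
  set u := expec (fun x => D x ^ 2) with hu
  set A := expec (fun x => |D x|) with hA
  set B := expec (fun x => |D x| ^ 3) with hB
  set Q := expec (fun x => D x ^ 4) with hQ
  have hunn : 0 ≤ u := expec_nonneg fun x => sq_nonneg _
  have hAnn : 0 ≤ A := expec_nonneg fun x => abs_nonneg _
  have hBnn : 0 ≤ B := expec_nonneg fun x => by positivity
  have cs1 : u ^ 2 ≤ A * B := by
    have h := expec_cs (fun x => Real.sqrt |D x|) (fun x => |D x| * Real.sqrt |D x|)
    have e0 : expec (fun x => Real.sqrt |D x| * (|D x| * Real.sqrt |D x|))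
        = expec (fun x => D x ^ 2) := by
      refine expec_congr fun x => ?_
      have h1 : Real.sqrt |D x| * (|D x| * Real.sqrt |D x|)
          = |D x| * (Real.sqrt |D x| * Real.sqrt |D x|) := by ring
      rw [h1, Real.mul_self_sqrt (abs_nonneg _), ← sq_abs]
      ring
    have e1 : expec (fun x => (Real.sqrt |D x|) ^ 2) = expec (fun x => |D x|) :=
      expec_congr fun x => Real.sq_sqrt (abs_nonneg _)
    have e2 : expec (fun x => (|D x| * Real.sqrt |D x|) ^ 2) = expec (fun x => |D x| ^ 3) := by
      refine expec_congr fun x => ?_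
      rw [mul_pow, Real.sq_sqrt (abs_nonneg _)]
      ring
    rw [e0, e1, e2] at h
    exact h
  have cs2 : B ^ 2 ≤ u * Q := by
    have h := expec_cs (fun x => |D x|) (fun x => D x ^ 2)
    have e0 : expec (fun x => |D x| * D x ^ 2) = expec (fun x => |D x| ^ 3) := by
      refine expec_congr fun x => ?_
      rw [← sq_abs]
      ring
    have e1 : expec (fun x => |D x| ^ 2) = expec (fun x => D x ^ 2) :=
      expec_congr fun x => sq_abs _
    have e2 : expec (fun x => (D x ^ 2) ^ 2) = expec (fun x => D x ^ 4) :=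
      expec_congr fun x => by ring
    rw [e0, e1, e2] at h
    exact h
  clear_value u A B Q
  rcases eq_or_lt_of_le hunn with h0 | hu0
  · rw [← h0]
    positivity
  · have k1 : u ^ 4 ≤ A ^ 2 * B ^ 2 := by nlinarith [sq_nonneg u, mul_nonneg hAnn hBnn]
    have k2 : A ^ 2 * B ^ 2 ≤ A ^ 2 * (u * Q) :=
      mul_le_mul_of_nonneg_left cs2 (sq_nonneg A)
    have k3 : A ^ 2 * (u * Q) ≤ A ^ 2 * (u * (81 * u ^ 2)) :=
      mul_le_mul_of_nonneg_left (mul_le_mul_of_nonneg_left h4 hunn) (sq_nonneg A)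
    have key : u ^ 4 ≤ 81 * A ^ 2 * u ^ 3 := by
      calc u ^ 4 ≤ A ^ 2 * B ^ 2 := k1
      _ ≤ A ^ 2 * (u * Q) := k2
      _ ≤ A ^ 2 * (u * (81 * u ^ 2)) := k3
      _ = 81 * A ^ 2 * u ^ 3 := by ring
    nlinarith [key, pow_pos hu0 3]

end
end FKNaux

set_option maxHeartbeats 2000000 in
open FKNaux in
/-- The Friedgut–Kalai–Naor theorem, with the explicit constant C = 2 + 3⁶. -/
theorem FKN {n : ℕ} (hn : 1 ≤ n) (f : (Fin n → Bool) → ℝ)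
    (hf : ∀ x, f x = 1 ∨ f x = -1) :
    ∃ i : Fin n,
      pnorm 2 (fun x => f x - fcoef f {i} * (if x i then (1 : ℝ) else -1)) ^ 2 ≤
        (2 + 3 ^ 6) *
          (1 - ∑ S ∈ Finset.univ.filter (fun S : Finset (Fin n) => S.card = 1),
                fcoef f S ^ 2) := by
  classical
  have hpos : 0 < n := hn
  set a : Fin n → ℝ := fun i => fcoef f {i} with ha
  -- the sum over singletons is the sum over coordinates
  have hsum_rw : ∑ S ∈ Finset.univ.filter (fun S : Finset (Fin n) => S.card = 1),
      fcoef f S ^ 2 = ∑ i : Fin n, a i ^ 2 := by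
    have himg : Finset.univ.filter (fun S : Finset (Fin n) => S.card = 1)
        = Finset.univ.image (fun i : Fin n => ({i} : Finset (Fin n))) := by
      ext S
      simp [Finset.card_eq_one, eq_comm]
    rw [himg, Finset.sum_image (fun x _ y _ h => Finset.singleton_injective h)]
  -- basic identities
  have hfc : ∀ i : Fin n, expec (fun x => f x * sgn i x) = a i := by
    intro i
    exact (expec_congr fun x => by rw [chi_singleton]).symm
  obtain ⟨key1, key2, key3⟩ := key a Finset.univ
  set g : (Fin n → Bool) → ℝ := gg a Finset.univ with hg
  set W : ℝ := ∑ i : Fin n, a i ^ 2 with hW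
  set p2 : ℝ := ∑ i : Fin n, a i ^ 4 with hp2
  have hWnn : 0 ≤ W := Finset.sum_nonneg fun i _ => sq_nonneg _
  have Ef2 : expec (fun x => f x ^ 2) = 1 := by
    rw [expec_congr (G := fun _ => (1:ℝ)) fun x => by rcases hf x with h | h <;> rw [h] <;> norm_num,
      expec_const]
  have Efg : expec (fun x => f x * g x) = W := by
    have e : expec (fun x => f x * g x)
        = expec (fun x => ∑ i : Fin n, a i * (f x * sgn i x)) := by
      refine expec_congr fun x => ?_
      rw [hg, gg, Finset.mul_sum]
      exact Finset.sum_congr rfl fun i _ => by ring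
    rw [e, expec_sum]
    rw [hW]
    refine Finset.sum_congr rfl fun i _ => ?_
    rw [expec_const_mul, hfc i]
    ring
  have Eg2 : expec (fun x => g x ^ 2) = W := key1
  have Emin : expec (fun x => (f x - g x) ^ 2) = 1 - W := by
    have e : expec (fun x => (f x - g x) ^ 2)
        = expec (fun x => (f x ^ 2 - 2 * (f x * g x)) + g x ^ 2) :=
      expec_congr fun x => by ring
    rw [e, expec_add, expec_sub, expec_const_mul, Ef2, Efg, Eg2]
    ring
  have Eplus : expec (fun x => (f x + g x) ^ 2) = 1 + 3 * W := by
    have e : expec (fun x => (f x + g x) ^ 2)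
        = expec (fun x => (f x ^ 2 + 2 * (f x * g x)) + g x ^ 2) :=
      expec_congr fun x => by ring
    rw [e, expec_add, expec_add, expec_const_mul, Ef2, Efg, Eg2]
    ring
  have hW1 : W ≤ 1 := by
    have h := expec_nonneg fun x => sq_nonneg (f x - g x)
    rw [Emin] at h
    linarith
  -- the L¹ bound on |g²-1|
  set Epsi : ℝ := expec (fun x => |g x ^ 2 - 1|) with hEpsi
  have hpsinn : 0 ≤ Epsi := expec_nonneg fun x => abs_nonneg _
  have hpsi_sq : Epsi ^ 2 ≤ (1 - W) * (1 + 3 * W) := by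
    have h := expec_cs (fun x => |f x - g x|) (fun x => |f x + g x|)
    have e0 : expec (fun x => |f x - g x| * |f x + g x|) = Epsi := by
      refine expec_congr fun x => ?_
      rw [← abs_mul]
      have hfx : (f x - g x) * (f x + g x) = -(g x ^ 2 - 1) := by
        rcases hf x with h1 | h1 <;> rw [h1] <;> ring
      rw [hfx, abs_neg]
    have e1 : expec (fun x => |f x - g x| ^ 2) = 1 - W := by
      rw [expec_congr fun x => sq_abs (f x - g x), Emin]
    have e2 : expec (fun x => |f x + g x| ^ 2) = 1 + 3 * W := by
      rw [expec_congr fun x => sq_abs (f x + g x), Eplus]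
    rw [e0, e1, e2] at h
    exact h
  -- the degree-2 part D = g² - W
  set EabsD : ℝ := expec (fun x => |g x ^ 2 - W|) with hEabsD
  have habsDnn : 0 ≤ EabsD := expec_nonneg fun x => abs_nonneg _
  have habsD : EabsD ≤ Epsi + (1 - W) := by
    have e : EabsD ≤ expec (fun x => |g x ^ 2 - 1| + (1 - W)) := by
      refine expec_mono fun x => ?_
      have h1 : g x ^ 2 - W = (g x ^ 2 - 1) + (1 - W) := by ring
      rw [h1]
      calc |(g x ^ 2 - 1) + (1 - W)| ≤ |g x ^ 2 - 1| + |1 - W| := abs_add_le _ _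
      _ = |g x ^ 2 - 1| + (1 - W) := by
            rw [abs_of_nonneg (show (0:ℝ) ≤ 1 - W by linarith)]
    rw [expec_add, expec_const] at e
    exact e
  have hED2 : expec (fun x => (g x ^ 2 - W) ^ 2) = 2 * (W ^ 2 - p2) := by
    have e : expec (fun x => (g x ^ 2 - W) ^ 2)
        = expec (fun x => (g x ^ 4 - (2 * W) * g x ^ 2) + W ^ 2) :=
      expec_congr fun x => by ring
    rw [e, expec_add, expec_sub, expec_const_mul, expec_const, key2, Eg2]
    rw [hW, hp2]
    ring
  have hinterp : expec (fun x => (g x ^ 2 - W) ^ 2) ≤ 81 * EabsD ^ 2 :=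
    L1L2 (fun x => g x ^ 2 - W) key3
  -- combine : 2(W² - p2) ≤ 162 (1-W²)
  have hchain : 2 * (W ^ 2 - p2) ≤ 162 * ((1 - W) * (1 + 3 * W)) + 162 * (1 - W) ^ 2 := by
    have h1 : EabsD ^ 2 ≤ 2 * Epsi ^ 2 + 2 * (1 - W) ^ 2 := by
      nlinarith [habsD, habsDnn, hpsinn, hW1, sq_nonneg (Epsi - (1 - W))]
    nlinarith [hinterp, hED2, hpsi_sq]
  -- the maximal coordinate
  obtain ⟨i0, -, hmax⟩ := Finset.exists_max_image Finset.univ (fun i => a i ^ 2)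
    ⟨⟨0, hpos⟩, Finset.mem_univ _⟩
  have hMW : p2 ≤ a i0 ^ 2 * W := by
    rw [hp2, hW, Finset.mul_sum]
    refine Finset.sum_le_sum fun i _ => ?_
    nlinarith [hmax i (Finset.mem_univ i), sq_nonneg (a i)]
  have hMle : a i0 ^ 2 ≤ W := by
    rw [hW]
    exact Finset.single_le_sum (fun i _ => sq_nonneg (a i)) (Finset.mem_univ i0)
  refine ⟨i0, ?_⟩
  rw [hsum_rw]
  -- compute the LHS
  have hQval : expec (fun x => (f x - fcoef f {i0} * (if x i0 then (1:ℝ) else -1)) ^ 2)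
      = 1 - a i0 ^ 2 := by
    have e : expec (fun x => (f x - fcoef f {i0} * (if x i0 then (1:ℝ) else -1)) ^ 2)
        = expec (fun x => (f x ^ 2 - (2 * a i0) * (f x * sgn i0 x)) + a i0 ^ 2) := by
      refine expec_congr fun x => ?_
      have hs : (if x i0 then (1:ℝ) else -1) = sgn i0 x := rfl
      have hai : fcoef f {i0} = a i0 := rfl
      rw [hs, hai]
      rcases sgn_cases i0 x with h | h <;> rw [h] <;> ring
    rw [e, expec_add, expec_sub, expec_const_mul, Ef2, expec_const, hfc i0]
    ring
  have hLHS : pnorm 2 (fun x => f x - fcoef f {i0} * (if x i0 then (1:ℝ) else -1)) ^ 2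
      = 1 - a i0 ^ 2 := by
    rw [pnorm]
    have e1 : expec (fun x => |f x - fcoef f {i0} * (if x i0 then (1:ℝ) else -1)| ^ (2:ℝ))
        = 1 - a i0 ^ 2 := by
      rw [← hQval]
      refine expec_congr fun x => ?_
      rw [show (2:ℝ) = ((2:ℕ):ℝ) by norm_num, Real.rpow_natCast, sq_abs]
    rw [e1]
    have h0 : (0:ℝ) ≤ 1 - a i0 ^ 2 := by linarith
    rw [← Real.rpow_natCast ((1 - a i0 ^ 2) ^ ((1:ℝ)/2)) 2, ← Real.rpow_mul h0]
    norm_num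
  rw [hLHS]
  -- final numeric inequality
  have hMnn : 0 ≤ a i0 ^ 2 := sq_nonneg _
  set M : ℝ := a i0 ^ 2 with hM
  clear_value M
  clear hM hmax hQval hLHS hfc hsum_rw hED2 hinterp key1 key2 key3 Ef2 Efg Eg2 Emin Eplus hpsi_sq habsD habsDnn hpsinn
  clear_value W p2 Epsi EabsD
  clear hW hp2 hEpsi hEabsD
  clear_value a g
  clear ha hg hf f hn hpos i0 a g
  have h731 : (2:ℝ) + 3 ^ 6 = 731 := by norm_num
  rw [h731]
  by_cases hc : W ≤ 730 / 731
  · linarith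
  · push_neg at hc
    have hWpos : (0:ℝ) < W := by linarith
    have hp : W ^ 2 - p2 ≤ 162 - 162 * W ^ 2 := by nlinarith [hchain]
    have h2 : (731 * W - 730) * W ≤ M * W := by
      nlinarith [hp, hMW, hW1, hc,
        mul_nonneg (show (0:ℝ) ≤ 1 - W by linarith) (show (0:ℝ) ≤ W - 324/1136 by linarith)]
    have h3 : 731 * W - 730 ≤ M := le_of_mul_le_mul_right h2 hWpos
    linarith
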